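/- For nonnegative integers h, a, b, the product of Gaussian binomial coefficients satisfies [h choose a]_q [h choose b]_q = ∑_{k=0}^{b} [h choose a+k]_q [a+k choose b]_q [b choose k]_q q^{k(a-b+k)}, as an identity in ℤ[q, q^{-1}]. -/

import Mathlib

/-
The summand factors through the q-analogue of "choosing a subset of a subset":
`[h, a+k] [a+k, b] [b, k] = [h, a] [h-a, k] [a, b-k]`, which follows from
`[m+n, m] [m]! [n]! = [m+n]!`. The right-hand side is therefore `[h, a]` times
`∑_k [h-a, k] [a, b-k] q^{k(a-b+k)}`, and this sum is `[h, b]` by q-Chu–Vandermonde, proved by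
induction on `a` from the q-Pascal recurrence.
-/

open Polynomial Finset

/-- The q-integer `[n]_q = 1 + q + ⋯ + q^{n-1}` as a polynomial in `ℤ[q]`. -/
noncomputable def qint (n : ℕ) : Polynomial ℤ := ∑ i ∈ Finset.range n, X ^ i

/-- The q-factorial `[n]_q! = [n]_q [n-1]_q ⋯ [1]_q`. -/
noncomputable def qfact : ℕ → Polynomial ℤ
  | 0 => 1
  | n + 1 => qint (n + 1) * qfact n

/-- The Gaussian (q-)binomial coefficient `[n choose k]_q` as a polynomial in `ℤ[q]`,
defined by the q-Pascal recurrence; it equals `∏_{i=1}^k (1-q^{n-i+1})/(1-q^i)` for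
`0 ≤ k ≤ n` and `0` otherwise. -/
noncomputable def qbinom : ℕ → ℕ → Polynomial ℤ
  | _, 0 => 1
  | 0, _ + 1 => 0
  | n + 1, k + 1 => qbinom n k + X ^ (k + 1) * qbinom n (k + 1)

lemma qbinom_zero_right (n : ℕ) : qbinom n 0 = 1 := by cases n <;> rfl

lemma qbinom_succ_succ (n k : ℕ) :
    qbinom (n + 1) (k + 1) = qbinom n k + X ^ (k + 1) * qbinom n (k + 1) := rfl

lemma qbinom_eq_zero_of_lt {n k : ℕ} (h : n < k) : qbinom n k = 0 := by
  induction n generalizing k with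
  | zero => obtain ⟨j, rfl⟩ := Nat.exists_eq_succ_of_ne_zero h.ne'; rfl
  | succ n ih =>
    obtain ⟨j, rfl⟩ := Nat.exists_eq_succ_of_ne_zero (Nat.ne_zero_of_lt h)
    rw [qbinom_succ_succ, ih (by omega), ih (by omega), mul_zero, add_zero]

lemma qbinom_self (n : ℕ) : qbinom n n = 1 := by
  induction n with
  | zero => rfl
  | succ n ih => rw [qbinom_succ_succ, ih, qbinom_eq_zero_of_lt n.lt_succ_self, mul_zero, add_zero]

lemma qint_add (m n : ℕ) : qint (m + n) = qint m + X ^ m * qint n := by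
  simp only [qint, sum_range_add, mul_sum, pow_add]

lemma qfact_succ (n : ℕ) : qfact (n + 1) = qint (n + 1) * qfact n := rfl

lemma qfact_ne_zero (n : ℕ) : qfact n ≠ 0 := by
  induction n with
  | zero => exact one_ne_zero
  | succ n ih =>
    refine mul_ne_zero (fun h0 => ?_) ih
    have : (n : ℤ) + 1 = 0 := by simpa [qint] using congrArg (eval 1) h0
    omega

lemma qbinom_add_mul_qfact_mul_qfact (m n : ℕ) :
    qbinom (m + n) m * qfact m * qfact n = qfact (m + n) := by
  induction n generalizing m with
  | zero => rw [add_zero, qbinom_self, qfact, one_mul, mul_one]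
  | succ n ihn =>
    induction m with
    | zero => rw [zero_add, qbinom_zero_right, qfact, one_mul, one_mul]
    | succ m ihm =>
      have hn := ihn (m + 1)
      rw [qfact_succ m] at hn
      rw [show m + (n + 1) = m + 1 + n by omega, qfact_succ n] at ihm
      rw [show m + 1 + (n + 1) = m + 1 + n + 1 by omega, qbinom_succ_succ, qfact_succ (m + 1 + n),
        qfact_succ m, qfact_succ n, show m + 1 + n + 1 = (m + 1) + (n + 1) by omega]
      linear_combination qint (m + 1) * ihm + X ^ (m + 1) * qint (n + 1) * hn
        - qfact (m + 1 + n) * qint_add (m + 1) (n + 1)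

lemma qbinom_symm_add (m n : ℕ) : qbinom (m + n) m = qbinom (m + n) n := by
  apply mul_right_cancel₀ (mul_ne_zero (qfact_ne_zero m) (qfact_ne_zero n))
  have hm := qbinom_add_mul_qfact_mul_qfact m n
  have hn := qbinom_add_mul_qfact_mul_qfact n m
  rw [add_comm n m] at hn
  linear_combination hm - hn

lemma qbinom_mul_qbinom (n : ℕ) {m j : ℕ} (hjm : j ≤ m) :
    qbinom n m * qbinom m j = qbinom n j * qbinom (n - j) (m - j) := by
  obtain ⟨i, rfl⟩ := Nat.exists_eq_add_of_le hjm
  rcases lt_or_ge n (j + i) with hn | hn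
  · rcases lt_or_ge n j with hj | hj
    · rw [qbinom_eq_zero_of_lt hn, qbinom_eq_zero_of_lt hj, zero_mul, zero_mul]
    · rw [qbinom_eq_zero_of_lt hn, qbinom_eq_zero_of_lt (by omega : n - j < j + i - j),
        zero_mul, mul_zero]
  obtain ⟨r, rfl⟩ := Nat.exists_eq_add_of_le hn
  rw [Nat.add_sub_cancel_left, add_assoc, Nat.add_sub_cancel_left]
  apply mul_right_cancel₀
    (mul_ne_zero (mul_ne_zero (qfact_ne_zero j) (qfact_ne_zero i)) (qfact_ne_zero r))
  have h1 := qbinom_add_mul_qfact_mul_qfact j i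
  have h2 := qbinom_add_mul_qfact_mul_qfact (j + i) r
  have h3 := qbinom_add_mul_qfact_mul_qfact i r
  have h4 := qbinom_add_mul_qfact_mul_qfact j (i + r)
  rw [← add_assoc] at h4 ⊢
  linear_combination (qbinom (j + i + r) (j + i) * qfact r) * h1 + h2
    - (qbinom (j + i + r) j * qfact j) * h3 - h4

open LaurentPolynomial in
theorem toLaurent_qbinom_add_eq (A B N : ℕ) :
    toLaurent (qbinom (A + B) N) =
      ∑ p ∈ antidiagonal N,
        toLaurent (qbinom A p.1 * qbinom B p.2) * T (p.1 * ((B : ℤ) - p.2)) := by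
  induction B generalizing N with
  | zero =>
    cases N with
    | zero => simp [qbinom_zero_right]
    | succ N =>
      rw [Nat.sum_antidiagonal_succ']
      simp [qbinom_zero_right, qbinom_eq_zero_of_lt]
  | succ B ih =>
    cases N with
    | zero => simp [qbinom_zero_right]
    | succ M =>
      rw [← add_assoc, qbinom_succ_succ, map_add, map_mul, toLaurent_X_pow, ih, ih,
        Nat.sum_antidiagonal_succ', Nat.sum_antidiagonal_succ' (n := M), mul_add, mul_sum]
      have hterm : ∀ p ∈ antidiagonal M,
          toLaurent (qbinom A p.1 * qbinom (B + 1) (p.2 + 1)) *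
              T (p.1 * (((B + 1 : ℕ) : ℤ) - (p.2 + 1 : ℕ))) =
            toLaurent (qbinom A p.1 * qbinom B p.2) * T (p.1 * ((B : ℤ) - p.2)) +
              T (M + 1 : ℕ) * (toLaurent (qbinom A p.1 * qbinom B (p.2 + 1)) *
                T (p.1 * ((B : ℤ) - (p.2 + 1 : ℕ)))) := by
        rintro ⟨i, j⟩ hij
        rw [HasAntidiagonal.mem_antidiagonal] at hij
        subst hij
        have hT : T (j + 1 : ℕ) * T (i * (((B + 1 : ℕ) : ℤ) - (j + 1 : ℕ))) =
            (T (i + j + 1 : ℕ) * T (i * ((B : ℤ) - (j + 1 : ℕ))) : ℤ[T;T⁻¹]) := by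
          rw [← T_add, ← T_add]; congr 1; push_cast; ring
        have hexp : (i : ℤ) * (((B + 1 : ℕ) : ℤ) - (j + 1 : ℕ)) = i * ((B : ℤ) - j) := by
          push_cast; ring
        simp only [qbinom_succ_succ, map_mul, map_add, toLaurent_X_pow]
        linear_combination (toLaurent (qbinom A i) * toLaurent (qbinom B (j + 1))) * hT
          + toLaurent (qbinom A i) * toLaurent (qbinom B j) * congrArg (T (R := ℤ)) hexp
      have hedge : T ((M + 1 : ℕ) * (((B + 1 : ℕ) : ℤ) - (0 : ℕ))) =
          (T (M + 1 : ℕ) * T ((M + 1 : ℕ) * ((B : ℤ) - (0 : ℕ))) : ℤ[T;T⁻¹]) := by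
        rw [← T_add]; congr 1; push_cast; ring
      rw [sum_congr rfl hterm, sum_add_distrib, qbinom_zero_right, qbinom_zero_right, hedge]
      ring

lemma qbinom_mul_qbinom_mul_qbinom (n : ℕ) {a b k : ℕ} (hkb : k ≤ b) :
    qbinom n (a + k) * qbinom (a + k) b * qbinom b k =
      qbinom n a * (qbinom (n - a) k * qbinom a (b - k)) := by
  calc qbinom n (a + k) * qbinom (a + k) b * qbinom b k
      = qbinom n (a + k) * (qbinom (a + k) k * qbinom a (b - k)) := by
        rw [mul_assoc, qbinom_mul_qbinom (a + k) hkb, Nat.add_sub_cancel]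
    _ = qbinom n (a + k) * qbinom (a + k) a * qbinom a (b - k) := by
        rw [qbinom_symm_add, mul_assoc]
    _ = qbinom n a * (qbinom (n - a) k * qbinom a (b - k)) := by
        rw [qbinom_mul_qbinom n (Nat.le_add_right a k), Nat.add_sub_cancel_left, mul_assoc]

open LaurentPolynomial in
/-- `[h choose a]_q [h choose b]_q
  = ∑_{k=0}^{b} [h choose a+k]_q [a+k choose b]_q [b choose k]_q q^{k(a-b+k)}`
in `ℤ[q,q^{-1}]`. -/
theorem stmt10 (h a b : ℕ) :
    Polynomial.toLaurent (qbinom h a * qbinom h b) =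
      ∑ k ∈ Finset.range (b + 1),
        Polynomial.toLaurent (qbinom h (a + k) * qbinom (a + k) b * qbinom b k) *
          T ((k : ℤ) * ((a : ℤ) - b + k)) := by
  rcases lt_or_ge h a with hha | hah
  · rw [qbinom_eq_zero_of_lt hha, zero_mul, map_zero]
    refine (sum_eq_zero fun k _ => ?_).symm
    rw [qbinom_eq_zero_of_lt (hha.trans_le (Nat.le_add_right a k)), zero_mul, zero_mul, map_zero,
      zero_mul]
  · obtain ⟨c, rfl⟩ := Nat.exists_eq_add_of_le' hah
    rw [map_mul, toLaurent_qbinom_add_eq c a b, Nat.sum_antidiagonal_eq_sum_range_succ_mk, mul_sum]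
    refine sum_congr rfl fun k hk => ?_
    have hkb : k ≤ b := Nat.lt_succ_iff.mp (mem_range.mp hk)
    rw [qbinom_mul_qbinom_mul_qbinom _ hkb, Nat.add_sub_cancel, Nat.cast_sub hkb,
      show (k : ℤ) * (a - (b - k)) = k * (a - b + k) by ring]
    simp only [map_mul]
    ring
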